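/- arXiv:1609.00242 — 7 statements merged into one kernel-verified Lean document; each statement's English description precedes it below -/
import Mathlib

section
/- If the reaping number equals the continuum, then the strong polarized partition relation fails for the continuum: there exists a coloring c : 𝔠 × ω → 2 such that for no sets A ⊆ 𝔠 of cardinality 𝔠 and B ⊆ ω infinite is c constant on A × B. -/
/-!
Enumerate all subsets of `ω` in order type `𝔠` as `(B_β)_β`. Since `𝔯 = 𝔠`, the fewer than `𝔠`
infinite sets `B_β` with `β < α` are all split by a single set `S_α`; colour `(α, n)` by whether
`n ∈ S_α`. If `A × B` were homogeneous with `|A| = 𝔠` and `B = B_β` infinite, then `A` is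
unbounded in `𝔠`, so some `α ∈ A` lies above `β`, and `S_α` splits `B`: both colours occur on
`{α} × B`.
-/

open Cardinal Set

/-- `S` splits the infinite set `B` if both `B ∩ S` and `B \ S` are infinite. -/
def Splits (S B : Set ℕ) : Prop := (B ∩ S).Infinite ∧ (B \ S).Infinite

/-- The reaping number `𝔯`: the least cardinality of a family of infinite subsets of `ω`
such that no single infinite set splits every member of the family. -/
noncomputable def reapingNumber : Cardinal :=
  sInf {c : Cardinal | ∃ R : Set (Set ℕ), (∀ B ∈ R, B.Infinite) ∧
    (∀ S : Set ℕ, S.Infinite → ∃ B ∈ R, ¬ Splits S B) ∧ #R = c}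

theorem exists_splits_all_of_mk_lt_reapingNumber {R : Set (Set ℕ)} (hR : ∀ B ∈ R, B.Infinite)
    (hcard : #R < reapingNumber) : ∃ S : Set ℕ, S.Infinite ∧ ∀ B ∈ R, Splits S B := by
  by_contra! hunsplit
  have hle : reapingNumber ≤ #R := csInf_le' ⟨R, hR, hunsplit, rfl⟩
  exact hle.not_gt hcard

theorem Splits.exists_decide_mem_ne {S B : Set ℕ} [DecidablePred (· ∈ S)] (h : Splits S B)
    (v : Bool) : ∃ b ∈ B, decide (b ∈ S) ≠ v := by
  cases v with
  | false =>
    obtain ⟨b, hbB, hbS⟩ := h.1.nonempty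
    exact ⟨b, hbB, by simpa using hbS⟩
  | true =>
    obtain ⟨b, hbB, hbS⟩ := h.2.nonempty
    exact ⟨b, hbB, by simpa using hbS⟩

theorem exists_coloring_not_const_of_splits {T : Type*} [LT T] (e : T → Set ℕ)
    (he : Function.Surjective e)
    (hsplit : ∀ α, ∃ S : Set ℕ, ∀ β < α, (e β).Infinite → Splits S (e β)) :
    ∃ c : T × ℕ → Bool, ∀ A : Set T, ∀ B : Set ℕ, (∀ β, ∃ α ∈ A, β < α) → B.Infinite →
      ¬ ∃ v : Bool, ∀ a ∈ A, ∀ b ∈ B, c (a, b) = v := by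
  classical
  choose S hS using hsplit
  refine ⟨fun p => decide (p.2 ∈ S p.1), ?_⟩
  rintro A B hA hB ⟨v, hv⟩
  obtain ⟨β, rfl⟩ := he B
  obtain ⟨α, hαA, hβα⟩ := hA β
  obtain ⟨b, hbB, hb⟩ := (hS α β hβα hB).exists_decide_mem_ne v
  exact hb (hv α hαA b hbB)

theorem Cardinal.exists_mem_gt_of_mk_eq {κ : Cardinal} (hκ : ℵ₀ ≤ κ) {A : Set κ.ord.ToType}
    (hA : #A = κ) (β : κ.ord.ToType) : ∃ α ∈ A, β < α := by
  have := Cardinal.noMaxOrder hκ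
  obtain ⟨γ, hβγ⟩ := exists_gt β
  by_contra! hbounded
  have hAγ : A ⊆ Iio γ := fun α hα => (hbounded α hα).trans_lt hβγ
  have hγ : #(Iio γ) < κ := by simpa using mk_Iio_lt γ (by simp)
  exact (hA ▸ mk_le_mk_of_subset hAγ).not_gt hγ

theorem reaping_eq_continuum_implies_neg_polarized
    (h : reapingNumber = Cardinal.continuum) :
    ∃ c : Cardinal.continuum.ord.ToType × ℕ → Bool,
      ∀ A : Set Cardinal.continuum.ord.ToType, ∀ B : Set ℕ,
        #A = Cardinal.continuum → B.Infinite →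
          ¬ ∃ v : Bool, ∀ a ∈ A, ∀ b ∈ B, c (a, b) = v := by
  obtain ⟨e⟩ : Nonempty (Cardinal.continuum.ord.ToType ≃ Set ℕ) := by
    rw [← lift_mk_eq']
    simp [mk_set]
  have hsplit : ∀ α, ∃ S : Set ℕ, ∀ β < α, (e β).Infinite → Splits S (e β) := by
    intro α
    have hcard : #({B | B.Infinite} ∩ e '' Iio α : Set (Set ℕ)) < reapingNumber := by
      rw [h]
      refine (mk_le_mk_of_subset inter_subset_right).trans_lt ?_
      refine lift_lt_continuum.mp (mk_image_le_lift.trans_lt (lift_lt_continuum.mpr ?_))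
      simpa using mk_Iio_lt α (by simp)
    obtain ⟨S, -, hS⟩ := exists_splits_all_of_mk_lt_reapingNumber (fun B hB => hB.1) hcard
    exact ⟨S, fun β hβ hinf => hS _ ⟨hinf, β, hβ, rfl⟩⟩
  obtain ⟨c, hc⟩ := exists_coloring_not_const_of_splits e e.surjective hsplit
  exact ⟨c, fun A B hA hB => hc A B (exists_mem_gt_of_mk_eq aleph0_le_continuum hA) hB⟩
end

section
/- If 𝔯 = 𝔠 then the splitting number 𝔰 is at most the cofinality of the continuum. -/
/-!
Write `Set ℕ` as the union of `cf 𝔠` families of size `< 𝔠`, namely the initial segments of a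
well-order of type `𝔠` taken along a cofinal subset. Since `𝔯 = 𝔠`, each such family is too small
to be unreaped, so a single set splits all of its infinite members; these `cf 𝔠` sets form a
splitting family.
-/

open Cardinal Set

/-- The splitting number `𝔰`: the least cardinality of a splitting family. -/
noncomputable def splittingNumber : Cardinal :=
  sInf {c : Cardinal | ∃ F : Set (Set ℕ),
    (∀ B : Set ℕ, B.Infinite → ∃ S ∈ F, Splits S B) ∧ #F = c}

universe u

theorem Cardinal.exists_cof_cover_mk_lt {α : Type u} (hα : ℵ₀ ≤ #α) :
    ∃ (ι : Type u) (R : ι → Set α), #ι = (#α).ord.cof ∧ (⋃ i, R i) = Set.univ ∧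
      ∀ i, #(R i) < #α := by
  obtain ⟨_, _, hord⟩ := exists_ord_eq_type_lt α
  obtain ⟨C, hC, hCcard⟩ := Order.exists_cof_eq α
  refine ⟨C, fun c => Iic c.1, ?_, ?_, fun c => mk_Iic_lt _ hord hα⟩
  · rw [hCcard, hord, Ordinal.cof_type]
  · refine eq_univ_of_forall fun a => ?_
    obtain ⟨c, hc, hac⟩ := hC a
    exact mem_iUnion.2 ⟨⟨c, hc⟩, hac⟩

theorem exists_splits_of_mk_lt_reapingNumber {R : Set (Set ℕ)} (hR : ∀ B ∈ R, B.Infinite)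
    (hlt : #R < reapingNumber) : ∃ S, ∀ B ∈ R, Splits S B := by
  by_contra! hunreaped
  exact hlt.not_ge <| csInf_le' ⟨R, hR, fun S _ => hunreaped S, rfl⟩

theorem splittingNumber_le_mk {F : Set (Set ℕ)}
    (hF : ∀ B : Set ℕ, B.Infinite → ∃ S ∈ F, Splits S B) :
    splittingNumber ≤ #F :=
  csInf_le' ⟨F, hF, rfl⟩

theorem splittingNumber_le_mk_of_cover_mk_lt_reapingNumber {ι : Type} (R : ι → Set (Set ℕ))
    (hcover : ∀ B : Set ℕ, B.Infinite → ∃ i, B ∈ R i) (hR : ∀ i, #(R i) < reapingNumber) :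
    splittingNumber ≤ #ι := by
  have hsplitter : ∀ i, ∃ S, ∀ B ∈ {B ∈ R i | B.Infinite}, Splits S B := fun i =>
    exists_splits_of_mk_lt_reapingNumber (fun _ hB => hB.2)
      ((mk_le_mk_of_subset (sep_subset _ _)).trans_lt (hR i))
  choose S hS using hsplitter
  calc splittingNumber ≤ #(range S) := splittingNumber_le_mk fun B hB =>
        let ⟨i, hi⟩ := hcover B hB
        ⟨S i, mem_range_self i, hS i B ⟨hi, hB⟩⟩
    _ ≤ #ι := mk_range_le

theorem splitting_le_cof_continuum_of_reaping_eq_continuum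
    (h : reapingNumber = Cardinal.continuum) :
    splittingNumber ≤ Cardinal.continuum.ord.cof := by
  obtain ⟨ι, R, hι, hcover, hsmall⟩ :=
    exists_cof_cover_mk_lt (α := Set ℕ) (mk_set_nat ▸ aleph0_le_continuum)
  rw [mk_set_nat] at hι hsmall
  rw [← hι]
  refine splittingNumber_le_mk_of_cover_mk_lt_reapingNumber R (fun B _ => ?_) (h ▸ hsmall)
  exact mem_iUnion.1 (hcover ▸ mem_univ B)
end

section
/- The generalized reaping number 𝔯_θ is strictly greater than θ for every infinite cardinal θ. -/
open Cardinal Set Ordinal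

/-- For an infinite cardinal `θ` (represented by the type `θ.ord.ToType`),
`S` splits `B` if both `B ∩ S` and `B \ S` have cardinality `θ`. -/
def SplitsTheta (θ : Cardinal) (S B : Set θ.ord.ToType) : Prop :=
  #(B ∩ S : Set θ.ord.ToType) = θ ∧ #(B \ S : Set θ.ord.ToType) = θ

/-- The generalized reaping number `𝔯_θ`: the least cardinality of a family of
size-`θ` subsets of `θ` such that no single subset of `θ` splits all of them. -/
noncomputable def reapingNumberTheta (θ : Cardinal) : Cardinal :=
  sInf {c : Cardinal | ∃ R : Set (Set θ.ord.ToType), (∀ B ∈ R, #B = θ) ∧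
    (∀ S : Set θ.ord.ToType, ∃ B ∈ R, ¬ SplitsTheta θ S B) ∧ #R = c}

/-!
A family `R` of at most `θ` sets of size `θ` is split by a single set. Index `θ · θ · 2` points
by a well-order whose initial segments have size `< θ`, and choose by transfinite recursion
pairwise distinct points `f (B, a, b) ∈ B`: at each stage fewer than `θ` points are used, so a
fresh one is left in `B`. The points with `b = true` form a set `S` such that `B ∩ S` and
`B \ S` each contain `θ` of the chosen points. Conversely, for every `S` either `S` or its
complement has size `θ` and is not split by `S`, so the infimum defining `𝔯_θ` is attained by
an unsplittable family, which must then have more than `θ` members.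
-/

universe u

theorem exists_injective_forall_mem_of_isWellOrder {ι α : Type u} (r : ι → ι → Prop)
    [IsWellOrder ι r] (D : ι → Set α) (hD : ∀ i, #{j // r j i} < #(D i)) :
    ∃ f : ι → α, Function.Injective f ∧ ∀ i, f i ∈ D i := by
  have fresh : ∀ i (prev : {j // r j i} → α), ∃ x ∈ D i, x ∉ range prev := by
    intro i prev
    by_contra! hsub
    exact (mk_range_le.trans_lt (hD i)).not_ge (mk_le_mk_of_subset hsub)
  choose pick pick_mem pick_fresh using fresh
  let f : ι → α := IsWellFounded.fix r fun i prev => pick i fun j => prev j.1 j.2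
  have hf : ∀ i, f i = pick i fun j => f j.1 := IsWellFounded.fix_eq r _
  refine ⟨f, fun i j hij => ?_, fun i => hf i ▸ pick_mem _ _⟩
  by_contra hne
  rcases trichotomous_of r i j with hlt | heq | hgt
  · exact pick_fresh j (fun k => f k.1) ⟨⟨i, hlt⟩, hij.trans (hf j)⟩
  · exact hne heq
  · exact pick_fresh i (fun k => f k.1) ⟨⟨j, hgt⟩, hij.symm.trans (hf i)⟩

theorem exists_injective_forall_mem {ι α : Type u} (hι : #ι ≤ #α) (D : ι → Set α)
    (hD : ∀ i, #(D i) = #α) : ∃ f : ι → α, Function.Injective f ∧ ∀ i, f i ∈ D i := by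
  obtain ⟨r, _, hr⟩ := exists_ord_eq ι
  refine exists_injective_forall_mem_of_isWellOrder r D fun i => ?_
  rw [hD, ← card_typein]
  exact (card_typein_lt i hr).trans_le hι

theorem exists_set_splits {ι α : Type u} (hα : ℵ₀ ≤ #α) (hι : #ι ≤ #α) (C : ι → Set α)
    (hC : ∀ i, #(C i) = #α) :
    ∃ S : Set α, ∀ i, #(C i ∩ S : Set α) = #α ∧ #(C i \ S : Set α) = #α := by
  have hcard : #(ι × α × Bool) ≤ #α := by
    simp only [mk_prod, Cardinal.lift_id, Cardinal.lift_uzero, Cardinal.lift_ofNat, mk_fintype,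
      Fintype.card_bool, Nat.cast_ofNat]
    calc #ι * (#α * 2) ≤ #α * (#α * #α) := by
          gcongr; exact (natCast_lt_aleph0 (n := 2)).le.trans hα
      _ = #α := by rw [mul_eq_self hα, mul_eq_self hα]
  obtain ⟨f, hf, hfC⟩ := exists_injective_forall_mem hcard (fun p => C p.1) fun p => hC p.1
  have full : ∀ {s : Set α} (g : α → α), Function.Injective g → (∀ a, g a ∈ s) → #s = #α :=
    fun g hg hgs => (mk_set_le _).antisymm (mk_le_of_injective (hg.codRestrict hgs))
  refine ⟨range fun p : ι × α => f (p.1, p.2, true), fun i => ⟨?_, ?_⟩⟩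
  · refine full (fun a => f (i, a, true)) (fun a b h => ?_) fun a =>
      ⟨hfC (i, a, true), ⟨(i, a), rfl⟩⟩
    simpa using hf h
  · refine full (fun a => f (i, a, false)) (fun a b h => ?_) fun a =>
      ⟨hfC (i, a, false), fun ⟨p, hp⟩ => by simpa using hf hp⟩
    simpa using hf h

theorem exists_splitsTheta {θ : Cardinal} (hθ : ℵ₀ ≤ θ) (R : Set (Set θ.ord.ToType))
    (hR : #R ≤ θ) (hRθ : ∀ B ∈ R, #B = θ) : ∃ S, ∀ B ∈ R, SplitsTheta θ S B := by
  have hα : #θ.ord.ToType = θ := mk_ord_toType θ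
  obtain ⟨S, hS⟩ := exists_set_splits (hα.symm ▸ hθ) (hα.symm ▸ hR) (fun B : R => B.1)
    fun B => (hRθ B B.2).trans hα.symm
  exact ⟨S, fun B hB => by simpa only [SplitsTheta, hα] using hS ⟨B, hB⟩⟩

theorem mk_eq_or_mk_compl_eq {α : Type u} [Infinite α] (S : Set α) :
    #S = #α ∨ #(Sᶜ : Set α) = #α :=
  (mk_set_le S).eq_or_lt.imp_right (mk_compl_of_infinite S)

theorem exists_not_splitsTheta {θ : Cardinal} (hθ : ℵ₀ ≤ θ) (S : Set θ.ord.ToType) :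
    ∃ B : Set θ.ord.ToType, #B = θ ∧ ¬ SplitsTheta θ S B := by
  have : Infinite θ.ord.ToType := infinite_iff.2 (by rwa [mk_ord_toType])
  have hθ0 : θ ≠ 0 := (aleph0_pos.trans_le hθ).ne'
  rcases mk_eq_or_mk_compl_eq S with h | h <;> rw [mk_ord_toType] at h
  · exact ⟨S, h, fun hS => hθ0 (by simpa [SplitsTheta] using hS.2.symm)⟩
  · exact ⟨Sᶜ, h, fun hS => hθ0 (by simpa [SplitsTheta] using hS.1.symm)⟩

theorem exists_family_mk_eq_reapingNumberTheta {θ : Cardinal} (hθ : ℵ₀ ≤ θ) :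
    ∃ R : Set (Set θ.ord.ToType), (∀ B ∈ R, #B = θ) ∧
      (∀ S, ∃ B ∈ R, ¬ SplitsTheta θ S B) ∧ #R = reapingNumberTheta θ :=
  csInf_mem (s := {c | ∃ R : Set (Set θ.ord.ToType), (∀ B ∈ R, #B = θ) ∧
    (∀ S, ∃ B ∈ R, ¬ SplitsTheta θ S B) ∧ #R = c})
    ⟨_, {B | #B = θ}, fun _ hB => hB, exists_not_splitsTheta hθ, rfl⟩

theorem theta_lt_reapingNumberTheta (θ : Cardinal) (hθ : ℵ₀ ≤ θ) :
    θ < reapingNumberTheta θ := by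
  obtain ⟨R, hRθ, hR_unsplit, hR⟩ := exists_family_mk_eq_reapingNumberTheta hθ
  rw [← hR]
  by_contra! hle
  obtain ⟨S, hS⟩ := exists_splitsTheta hθ R hle hRθ
  obtain ⟨B, hB, hB_unsplit⟩ := hR_unsplit S
  exact hB_unsplit (hS B hB)
end

section
/- If the generalized reaping number 𝔯_θ equals 2^θ for an infinite cardinal θ, then the strong polarized relation (2^θ, θ) → (2^θ, θ)^{1,1}_2 fails: there is a coloring c : 2^θ × θ → 2 admitting no monochromatic product A × B with |A| = 2^θ and |B| = θ. -/
open Cardinal Set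

/-!
Enumerate the `2 ^ θ` subsets of `θ` of size `θ` as `(B_y)_{y < 2 ^ θ}`. Since fewer than
`𝔯_θ = 2 ^ θ` sets are never a reaping family, for each `x < 2 ^ θ` some `S_x` splits every
`B_y` with `y < x`. Colour `(x, b)` by whether `b ∈ S_x`. A set `A` of size `2 ^ θ` is unbounded
in `2 ^ θ`, so for `B = B_y` it contains some `x > y`; then `S_x` splits `B`, and the row of `x`
takes both colours on `B`.
-/

lemma exists_splitsTheta_of_mk_lt_reapingNumberTheta {θ : Cardinal} {R : Set (Set θ.ord.ToType)}
    (hR : ∀ B ∈ R, #B = θ) (hlt : #R < reapingNumberTheta θ) :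
    ∃ S, ∀ B ∈ R, SplitsTheta θ S B := by
  by_contra! hcon
  exact hlt.not_ge (csInf_le' ⟨R, hR, hcon, rfl⟩)

lemma SplitsTheta.nonempty_inter_and_nonempty_diff {θ : Cardinal} {S B : Set θ.ord.ToType}
    (h : SplitsTheta θ S B) (hθ : θ ≠ 0) : (B ∩ S).Nonempty ∧ (B \ S).Nonempty := by
  simp only [← nonempty_coe_sort, ← mk_ne_zero_iff, h.1, h.2]
  exact ⟨hθ, hθ⟩

lemma Cardinal.mk_Iic_toType_ord_lt {κ : Cardinal} (hκ : ℵ₀ ≤ κ) (x : κ.ord.ToType) :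
    #(Iic x) < κ := by
  rw [← Iio_insert]
  exact mk_insert_le.trans_lt <|
    add_lt_of_lt hκ (by simpa using mk_Iio_lt x) (one_lt_aleph0.trans_le hκ)

lemma Cardinal.exists_mem_lt_of_mk_eq {κ : Cardinal} (hκ : ℵ₀ ≤ κ) {A : Set κ.ord.ToType}
    (hA : #A = κ) (y : κ.ord.ToType) : ∃ x ∈ A, y < x := by
  by_contra! h
  exact ((mk_le_mk_of_subset h).trans_lt (mk_Iic_toType_ord_lt hκ y)).ne hA

lemma exists_surjective_toType_two_pow (θ : Cardinal) :
    ∃ f : (2 ^ θ : Cardinal).ord.ToType → {B : Set θ.ord.ToType // #B = θ},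
      Function.Surjective f := by
  have hmk : #θ.ord.ToType = θ := by simp
  refine Function.exists_surjective_iff.2 ⟨⟨fun _ ↦ ⟨univ, by simp [hmk]⟩⟩, ?_⟩
  refine Cardinal.le_def _ _ |>.1 ?_
  calc #{B : Set θ.ord.ToType // #B = θ} ≤ #(Set θ.ord.ToType) := mk_subtype_le _
    _ = #(2 ^ θ : Cardinal).ord.ToType := by simp [hmk]

lemma exists_eventually_splitsTheta_of_two_pow_le_reapingNumberTheta {θ : Cardinal}
    (h : 2 ^ θ ≤ reapingNumberTheta θ) :
    ∃ S : (2 ^ θ : Cardinal).ord.ToType → Set θ.ord.ToType,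
      ∀ B : Set θ.ord.ToType, #B = θ → ∃ y, ∀ x, y < x → SplitsTheta θ (S x) B := by
  obtain ⟨f, hf⟩ := exists_surjective_toType_two_pow θ
  have hS : ∀ x : (2 ^ θ : Cardinal).ord.ToType, ∃ S, ∀ y < x, SplitsTheta θ S (f y) := by
    intro x
    have hlt : #((fun y ↦ (f y).1) '' Iio x) < reapingNumberTheta θ :=
      mk_image_le.trans_lt <| (show #(Iio x) < 2 ^ θ by simpa using mk_Iio_lt x).trans_le h
    obtain ⟨S, hS⟩ :=
      exists_splitsTheta_of_mk_lt_reapingNumberTheta (by rintro _ ⟨y, -, rfl⟩; exact (f y).2) hlt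
    exact ⟨S, fun y hy ↦ hS _ ⟨y, hy, rfl⟩⟩
  choose S hS using hS
  refine ⟨S, fun B hB ↦ ?_⟩
  obtain ⟨y, hy⟩ := hf ⟨B, hB⟩
  exact ⟨y, fun x hyx ↦ by simpa [hy] using hS x y hyx⟩

theorem neg_polarized_of_reapingNumberTheta_eq_two_pow
    (θ : Cardinal) (hθ : ℵ₀ ≤ θ) (h : reapingNumberTheta θ = 2 ^ θ) :
    ∃ c : (2 ^ θ : Cardinal).ord.ToType × θ.ord.ToType → Bool,
      ∀ A : Set (2 ^ θ : Cardinal).ord.ToType, ∀ B : Set θ.ord.ToType,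
        #A = 2 ^ θ → #B = θ →
          ¬ ∃ v : Bool, ∀ a ∈ A, ∀ b ∈ B, c (a, b) = v := by
  classical
  obtain ⟨S, hS⟩ := exists_eventually_splitsTheta_of_two_pow_le_reapingNumberTheta h.ge
  refine ⟨fun p ↦ decide (p.2 ∈ S p.1), fun A B hA hB ⟨v, hv⟩ ↦ ?_⟩
  obtain ⟨y, hy⟩ := hS B hB
  obtain ⟨x, hxA, hyx⟩ := exists_mem_lt_of_mk_eq (hθ.trans (cantor θ).le) hA y
  obtain ⟨⟨b, hbB, hbS⟩, ⟨b', hb'B, hb'S⟩⟩ :=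
    (hy x hyx).nonempty_inter_and_nonempty_diff (aleph0_pos.trans_le hθ).ne'
  have hcolours := (hv x hxA b hbB).trans (hv x hxA b' hb'B).symm
  simp [hbS, hb'S] at hcolours
end

section
/- If 2^ℵ₀ = ℵ₁ then the strong polarized relation (ℵ₁, ℵ₀) → (ℵ₁, ℵ₀)^{1,1}_2 fails: there exists c : ω₁ × ω → 2 such that for no uncountable A ⊆ ω₁ and infinite B ⊆ ω is c constant on A × B. -/
/-!
Under CH fix an enumeration `B ↦ e B` of `𝒫(ℕ)` in order type `ω₁`. Below each `α < ω₁` only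
countably many sets are enumerated, so a diagonal argument gives a row `c α : ℕ → Bool` taking both
values on every infinite one of them. An uncountable `A ⊆ ω₁` is cofinal, so for an infinite `B` it
contains some `α ≥ e B`, and `c` is not constant on `{α} × B`.
-/

open Cardinal Set

theorem exists_strictMono_forall_mem {S : ℕ → Set ℕ} (hS : ∀ k, (S k).Infinite) :
    ∃ n : ℕ → ℕ, StrictMono n ∧ ∀ k, n k ∈ S k := by
  choose g hgS hglt using fun k (a : ℕ) => (hS k).exists_gt a
  let n : ℕ → ℕ := fun k => Nat.rec (g 0 0) (fun k nk => g (k + 1) nk) k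
  refine ⟨n, strictMono_nat_of_lt_succ fun k => hglt _ _, fun k => ?_⟩
  cases k <;> apply hgS

theorem exists_bool_surjOn_forall {S : ℕ → Set ℕ} (hS : ∀ i, (S i).Infinite) :
    ∃ f : ℕ → Bool, ∀ i, SurjOn f (S i) univ := by
  obtain ⟨n, hn, hnS⟩ := exists_strictMono_forall_mem fun k => hS k.div2
  -- colour `n k` by the parity of `k`: `S i` contains both `n (2 * i)` and `n (2 * i + 1)`
  refine ⟨Function.extend n Nat.bodd fun _ => false, fun i b _ => ⟨n (Nat.bit b i), ?_, ?_⟩⟩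
  · simpa using hnS (Nat.bit b i)
  · simp [hn.injective.extend_apply]

theorem exists_bool_surjOn_of_countable {𝒮 : Set (Set ℕ)} (h𝒮 : 𝒮.Countable)
    (hinf : ∀ S ∈ 𝒮, S.Infinite) : ∃ f : ℕ → Bool, ∀ S ∈ 𝒮, SurjOn f S univ := by
  rcases 𝒮.eq_empty_or_nonempty with rfl | hne
  · exact ⟨fun _ => false, by simp⟩
  obtain ⟨S, rfl⟩ := h𝒮.exists_eq_range hne
  obtain ⟨f, hf⟩ := exists_bool_surjOn_forall (forall_mem_range.1 hinf)
  exact ⟨f, forall_mem_range.2 hf⟩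

theorem exists_coloring_surjOn_of_isCofinal {ι : Type*} [LE ι] (e : Set ℕ → ι)
    (he : ∀ α, {B | e B ≤ α}.Countable) :
    ∃ c : ι → ℕ → Bool, ∀ A : Set ι, IsCofinal A → ∀ B : Set ℕ, B.Infinite →
      ∃ a ∈ A, SurjOn (c a) B univ := by
  choose c hc using fun α =>
    exists_bool_surjOn_of_countable ((he α).mono inter_subset_left)
      (𝒮 := {B | e B ≤ α} ∩ {B | B.Infinite}) fun _ h => h.2
  refine ⟨c, fun A hA B hB => ?_⟩
  obtain ⟨a, ha, hBa⟩ := hA (e B)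
  exact ⟨a, ha, hc a B ⟨hBa, hB⟩⟩

namespace Cardinal

theorem isCofinal_of_mk_eq {c : Cardinal} {A : Set c.ord.ToType} (hA : #A = c) :
    IsCofinal A := by
  intro β
  by_contra! hbound
  have : #(Iio β) < c := by simpa using mk_Iio_lt β
  exact ((mk_le_mk_of_subset hbound).trans_lt this).ne hA

theorem countable_Iic_toType_ord_aleph_one (α : (aleph 1).ord.ToType) :
    (Iic α).Countable := by
  rw [← Iio_insert, countable_insert, ← le_aleph0_iff_set_countable, ← lt_aleph_one_iff]
  simpa using mk_Iio_lt α

theorem continuum_eq_aleph_one_iff_universe :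
    continuum.{u} = aleph 1 ↔ continuum.{v} = aleph 1 := by
  rw [← lift_inj.{u, v}, ← lift_inj.{v, u} (a := continuum.{v})]
  simp

theorem nonempty_equiv_toType_ord_aleph_one (h : continuum.{u} = aleph 1) :
    Nonempty (Set ℕ ≃ (aleph.{v} 1).ord.ToType) := by
  rw [← lift_mk_eq'.{0, v}]
  simpa using continuum_eq_aleph_one_iff_universe.{u, v}.1 h

end Cardinal

theorem neg_polarized_aleph_one_of_CH
    (h : Cardinal.continuum = Cardinal.aleph 1) :
    ∃ c : (Cardinal.aleph 1).ord.ToType × ℕ → Bool,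
      ∀ A : Set (Cardinal.aleph 1).ord.ToType, ∀ B : Set ℕ,
        #A = Cardinal.aleph 1 → B.Infinite →
          ¬ ∃ v : Bool, ∀ a ∈ A, ∀ b ∈ B, c (a, b) = v := by
  obtain ⟨e⟩ := nonempty_equiv_toType_ord_aleph_one h
  obtain ⟨c, hc⟩ := exists_coloring_surjOn_of_isCofinal e fun α =>
    (countable_Iic_toType_ord_aleph_one α).preimage e.injective
  refine ⟨fun p => c p.1 p.2, fun A B hA hB ⟨v, hv⟩ => ?_⟩
  obtain ⟨a, ha, hsurj⟩ := hc A (isCofinal_of_mk_eq hA) B hB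
  obtain ⟨m, hm, hmv⟩ := hsurj (mem_univ !v)
  simp [hv a ha m hm] at hmv
end

section
/- If κ is a cardinal with countable cofinality and κ ≤ 𝔰, then the strong polarized relation (κ, ω) → (κ, ω)^{1,1}_2 fails: there is a coloring c : κ × ω → 2 with no monochromatic A × B where |A| = κ and B is infinite. -/
/-!
Fix a sequence `u : ℕ → κ` cofinal in `κ`, which exists because `cf κ = ω`, and colour `(a, n)`
by whether `a ≤ u n`. A set `A` of size `κ` is unbounded in `κ`, so for any `n` it has a point
above `u n`; and any point of `A` lies below `u n` for all large `n`, hence for some `n` in an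
infinite `B`. So `A × B` sees both colours.
-/

open Cardinal Set

open Filter
open scoped Ordinal

theorem Filter.isCountablyGenerated_atTop_of_cof_le_aleph0 {α : Type*} [Preorder α]
    (h : Order.cof α ≤ ℵ₀) : (atTop : Filter α).IsCountablyGenerated := by
  obtain ⟨S, hS, hcard⟩ := Order.exists_cof_eq α
  have hSc : S.Countable := by
    rw [← Set.countable_coe_iff, ← mk_le_aleph0_iff]
    exact hcard.trans_le h
  exact ⟨⟨_, hSc.image Ici, atTop_eq_generate_of_forall_exists_le hS⟩⟩

theorem Cardinal.not_bddAbove_of_mk_eq {α : Type*} [LinearOrder α] [WellFoundedLT α]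
    (h : ord #α = typeLT α) (hα : ℵ₀ ≤ #α) {A : Set α} (hA : #A = #α) : ¬ BddAbove A :=
  fun ⟨b, hb⟩ => ((mk_le_mk_of_subset hb).trans_lt (mk_Iic_lt b h hα)).ne hA

theorem not_exists_monochromatic_le_of_tendsto {α : Type*} [Preorder α] [DecidableLE α]
    {u : ℕ → α} (hu : Tendsto u atTop atTop) {A : Set α} (hA : ¬ BddAbove A) {B : Set ℕ}
    (hB : B.Infinite) : ¬ ∃ v : Bool, ∀ a ∈ A, ∀ b ∈ B, decide (a ≤ u b) = v := by
  obtain ⟨b₀, hb₀⟩ := hB.nonempty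
  obtain ⟨a, haA, ha⟩ : ∃ a ∈ A, ¬ a ≤ u b₀ := not_bddAbove_iff'.mp hA (u b₀)
  obtain ⟨b, hbB, hab⟩ : ∃ b ∈ B, a ≤ u b :=
    ((Nat.frequently_atTop_iff_infinite.mpr hB).and_eventually
      (tendsto_atTop.mp hu a)).exists
  rintro ⟨v, hv⟩
  have h := (hv a haA b hbB).trans (hv a haA b₀ hb₀).symm
  simp [hab, ha] at h

theorem neg_polarized_of_countable_cof_below_splitting_general
    (κ : Cardinal) (hcof : κ.ord.cof = ℵ₀) :
    ∃ c : κ.ord.ToType × ℕ → Bool,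
      ∀ A : Set κ.ord.ToType, ∀ B : Set ℕ,
        #A = κ → B.Infinite →
          ¬ ∃ v : Bool, ∀ a ∈ A, ∀ b ∈ B, c (a, b) = v := by
  have hκ : ℵ₀ ≤ κ := hcof ▸ Ordinal.cof_ord_le κ
  have hcof' : Order.cof κ.ord.ToType = ℵ₀ := by rw [Ordinal.cof_toType, hcof]
  have : Nonempty κ.ord.ToType := Order.cof_ne_zero_iff.mp (hcof' ▸ aleph0_ne_zero)
  have : (atTop : Filter κ.ord.ToType).IsCountablyGenerated :=
    isCountablyGenerated_atTop_of_cof_le_aleph0 hcof'.le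
  obtain ⟨u, hu⟩ := exists_seq_tendsto (atTop : Filter κ.ord.ToType)
  refine ⟨fun p => decide (p.1 ≤ u p.2), fun A B hA hB => ?_⟩
  have hA' : ¬ BddAbove A :=
    not_bddAbove_of_mk_eq (by simp) (by rwa [mk_ord_toType]) (by rwa [mk_ord_toType])
  exact not_exists_monochromatic_le_of_tendsto hu hA' hB

theorem neg_polarized_of_countable_cof_below_splitting
    (κ : Cardinal) (hcof : κ.ord.cof = ℵ₀) (hκ : κ ≤ splittingNumber) :
    ∃ c : κ.ord.ToType × ℕ → Bool,
      ∀ A : Set κ.ord.ToType, ∀ B : Set ℕ,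
        #A = κ → B.Infinite →
          ¬ ∃ v : Bool, ∀ a ∈ A, ∀ b ∈ B, c (a, b) = v :=
  neg_polarized_of_countable_cof_below_splitting_general κ hcof
end

section
/- Let (X, Σ, m) be a probability space, θ an infinite cardinal, and for each α < θ let e_α : ω → (X → 2) be a sequence of measurable functions. Suppose there is a point i ∈ X such that the family {(e_α(n)(i))_{n∈ω} : α < θ} ⊆ 2^ω is a Sierpiński set, i.e. for every Lebesgue-null B ⊆ 2^ω, only countably many α have (e_α(n)(i))_n ∈ B. Then the coloring c(α, n) = e_α(n)(i) witnesses the failure of (θ, ω) → (ℵ₁, ω)^{1,1}_2: there are no sets H₀ ⊆ θ with |H₀| = ℵ₁ and H₁ ⊆ ω infinite such that c is constant on H₀ × H₁. -/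
/-! The reals that are constantly `v` on an infinite `H₁ ⊆ ω` form a null set (it lies in
cylinders of measure `2^{-k}` for every `k`), so by the Sierpiński property only countably many
`α` can have a row that is constantly `v` on `H₁`; hence `H₀` cannot have size `ℵ₁`. -/

open MeasureTheory Set Cardinal

/-- `μ` is the product probability measure on Cantor space `2^ω`. -/
def IsCoinFlipMeasure (μ : Measure (ℕ → Bool)) : Prop :=
  μ Set.univ = 1 ∧
    ∀ (s : Finset ℕ) (f : ℕ → Bool),
      μ {x | ∀ n ∈ s, x n = f n} = (1 / 2 : ENNReal) ^ s.card

theorem IsCoinFlipMeasure.measure_eqOn_infinite_eq_zero {μ : Measure (ℕ → Bool)}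
    (hμ : IsCoinFlipMeasure μ) (f : ℕ → Bool) {H : Set ℕ} (hH : H.Infinite) :
    μ {x | ∀ n ∈ H, x n = f n} = 0 := by
  have hhalf : Filter.Tendsto (fun k : ℕ => (1 / 2 : ENNReal) ^ k) Filter.atTop (nhds 0) :=
    ENNReal.tendsto_pow_atTop_nhds_zero_of_lt_one (by norm_num)
  refine nonpos_iff_eq_zero.mp (ge_of_tendsto' hhalf fun k => ?_)
  obtain ⟨s, hsH, rfl⟩ := hH.exists_subset_card_eq k
  calc μ {x | ∀ n ∈ H, x n = f n} ≤ μ {x | ∀ n ∈ s, x n = f n} :=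
        measure_mono fun x hx n hn => hx n (hsH hn)
    _ = (1 / 2) ^ s.card := hμ.2 s f

theorem sierpinski_family_gives_neg_polarized_general
    {X : Type*}
    (θ : Cardinal)
    (e : θ.ord.ToType → ℕ → X → Bool)
    (μ : Measure (ℕ → Bool)) (hμ : IsCoinFlipMeasure μ)
    (i : X)
    (hSier : ∀ B : Set (ℕ → Bool), μ B = 0 →
      {α : θ.ord.ToType | (fun n => e α n i) ∈ B}.Countable) :
    ¬ ∃ H₀ : Set θ.ord.ToType, ∃ H₁ : Set ℕ,
        #H₀ = Cardinal.aleph 1 ∧ H₁.Infinite ∧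
        ∃ v : Bool, ∀ α ∈ H₀, ∀ n ∈ H₁, e α n i = v := by
  rintro ⟨H₀, H₁, hcard, hH₁, v, hmono⟩
  have hnull := hμ.measure_eqOn_infinite_eq_zero (fun _ => v) hH₁
  have hcount : H₀.Countable := (hSier _ hnull).mono fun α hα n hn => hmono α hα n hn
  have hle := hcount.le_aleph0
  rw [hcard] at hle
  exact aleph0_lt_aleph_one.not_ge hle

theorem sierpinski_family_gives_neg_polarized
    {X : Type*} [MeasurableSpace X] (m : Measure X) [IsProbabilityMeasure m]
    (θ : Cardinal) (hθ : ℵ₀ ≤ θ)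
    (e : θ.ord.ToType → ℕ → X → Bool)
    (hmeas : ∀ (α : θ.ord.ToType) (n : ℕ), Measurable (e α n))
    (μ : Measure (ℕ → Bool)) (hμ : IsCoinFlipMeasure μ)
    (i : X)
    (hSier : ∀ B : Set (ℕ → Bool), μ B = 0 →
      {α : θ.ord.ToType | (fun n => e α n i) ∈ B}.Countable) :
    ¬ ∃ H₀ : Set θ.ord.ToType, ∃ H₁ : Set ℕ,
        #H₀ = Cardinal.aleph 1 ∧ H₁.Infinite ∧
        ∃ v : Bool, ∀ α ∈ H₀, ∀ n ∈ H₁, e α n i = v :=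
  sierpinski_family_gives_neg_polarized_general θ e μ hμ i hSier
end
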